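/- Capacity lower bound for unions: with the setup above, $\mathrm{cap}(K_1\cup K_2)\ge \mathrm{cap}(K_1)+\mathrm{cap}(K_2)-\sum_{z\in K_1}\sum_{w\in K_2}\big[m(z)G(z,w)+m(w)G(w,z)\big]$, where $G$ is the Green function. -/
import Mathlib


open MeasureTheory ENNReal

/-- Union-bound key step: the probability of avoiding `K` is at most the probability of
avoiding `K ∪ K'` plus the sum of Green functions to points of `K'`. -/
lemma avoid_le_avoid_union_add
    {S : Type*} [MeasurableSpace S] [DecidableEq S]
    (P : S → Measure (ℕ → S)) (z : S) (K K' : Finset S) :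
    P z {ω | ∀ n : ℕ, 1 ≤ n → ω n ∉ (K : Set S)}
      ≤ P z {ω | ∀ n : ℕ, 1 ≤ n → ω n ∉ ((K ∪ K' : Finset S) : Set S)}
        + ∑ w ∈ K', ∑' n : ℕ, P z {ω | ω n = w} := by
  classical
  set H : Set (ℕ → S) := ⋃ w ∈ K', {ω : ℕ → S | ∃ n, ω n = w} with hH
  have hsub : {ω : ℕ → S | ∀ n : ℕ, 1 ≤ n → ω n ∉ (K : Set S)}
      ⊆ {ω : ℕ → S | ∀ n : ℕ, 1 ≤ n → ω n ∉ ((K ∪ K' : Finset S) : Set S)} ∪ H := by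
    intro ω hω
    by_cases hωH : ω ∈ H
    · exact Or.inr hωH
    · refine Or.inl (fun n hn hmem => ?_)
      simp only [Finset.coe_union, Set.mem_union, Finset.mem_coe] at hmem
      rcases hmem with h1 | h2
      · exact hω n hn h1
      · exact hωH (Set.mem_biUnion h2 ⟨n, rfl⟩)
  calc P z {ω | ∀ n : ℕ, 1 ≤ n → ω n ∉ (K : Set S)}
      ≤ P z ({ω : ℕ → S | ∀ n : ℕ, 1 ≤ n → ω n ∉ ((K ∪ K' : Finset S) : Set S)} ∪ H) :=
        measure_mono hsub
    _ ≤ P z {ω | ∀ n : ℕ, 1 ≤ n → ω n ∉ ((K ∪ K' : Finset S) : Set S)} + P z H :=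
        measure_union_le _ _
    _ ≤ P z {ω | ∀ n : ℕ, 1 ≤ n → ω n ∉ ((K ∪ K' : Finset S) : Set S)}
          + ∑ w ∈ K', ∑' n : ℕ, P z {ω | ω n = w} := by
        gcongr
        calc P z H ≤ ∑ w ∈ K', P z {ω : ℕ → S | ∃ n, ω n = w} :=
              measure_biUnion_finset_le _ _
          _ ≤ ∑ w ∈ K', ∑' n : ℕ, P z {ω | ω n = w} := by
              refine Finset.sum_le_sum fun w _ => ?_
              have : {ω : ℕ → S | ∃ n, ω n = w} = ⋃ n, {ω : ℕ → S | ω n = w} := by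
                ext ω; simp
              rw [this]
              exact measure_iUnion_le _

/-- Capacity lower bound for unions: for disjoint finite sets `K₁, K₂`,
`cap(K₁ ∪ K₂) ≥ cap(K₁) + cap(K₂) - ∑_{z ∈ K₁} ∑_{w ∈ K₂} (m(z) G(z,w) + m(w) G(w,z))`. -/
theorem capacity_union_lower_bound
    {S : Type*} [Countable S] [MeasurableSpace S] [MeasurableSingletonClass S]
    [DecidableEq S]
    (P : S → Measure (ℕ → S)) (hP : ∀ x, IsProbabilityMeasure (P x))
    (hinit : ∀ x : S, P x {ω | ω 0 = x} = 1)
    (hmarkov : ∀ (x z : S) (n : ℕ) (B A : Set (ℕ → S)), MeasurableSet A →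
      (∀ ω ω' : ℕ → S, (∀ k ≤ n, ω k = ω' k) → (ω ∈ B ↔ ω' ∈ B)) →
      P x (B ∩ {ω | ω n = z} ∩ {ω | (fun k => ω (n + k)) ∈ A})
        = P x (B ∩ {ω | ω n = z}) * P z A)
    (htrans : ∀ x y : S, (∑' n : ℕ, P x {ω | ω n = y}) ≠ ⊤)
    (m : S → ℝ≥0∞) (hm : ∀ z, 0 < m z)
    (K₁ K₂ : Finset S) (hdisj : Disjoint K₁ K₂) :
    ∑ z ∈ K₁ ∪ K₂, m z * P z {ω | ∀ n : ℕ, 1 ≤ n → ω n ∉ ((K₁ ∪ K₂ : Finset S) : Set S)}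
      ≥ (∑ z ∈ K₁, m z * P z {ω | ∀ n : ℕ, 1 ≤ n → ω n ∉ (K₁ : Set S)})
          + (∑ z ∈ K₂, m z * P z {ω | ∀ n : ℕ, 1 ≤ n → ω n ∉ (K₂ : Set S)})
          - ∑ z ∈ K₁, ∑ w ∈ K₂,
              ((m z * ∑' n : ℕ, P z {ω | ω n = w}) + m w * ∑' n : ℕ, P w {ω | ω n = z}) := by
  rw [ge_iff_le, tsub_le_iff_right]
  rw [Finset.sum_union hdisj]
  have h1 : ∀ z ∈ K₁, m z * P z {ω | ∀ n : ℕ, 1 ≤ n → ω n ∉ (K₁ : Set S)}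
      ≤ m z * P z {ω | ∀ n : ℕ, 1 ≤ n → ω n ∉ ((K₁ ∪ K₂ : Finset S) : Set S)}
        + ∑ w ∈ K₂, m z * ∑' n : ℕ, P z {ω | ω n = w} := by
    intro z _
    rw [← Finset.mul_sum, ← mul_add]
    exact mul_le_mul_right (avoid_le_avoid_union_add P z K₁ K₂) _
  have h2 : ∀ w ∈ K₂, m w * P w {ω | ∀ n : ℕ, 1 ≤ n → ω n ∉ (K₂ : Set S)}
      ≤ m w * P w {ω | ∀ n : ℕ, 1 ≤ n → ω n ∉ ((K₁ ∪ K₂ : Finset S) : Set S)}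
        + ∑ z ∈ K₁, m w * ∑' n : ℕ, P w {ω | ω n = z} := by
    intro w _
    rw [← Finset.mul_sum, ← mul_add]
    have h := avoid_le_avoid_union_add P w K₂ K₁
    rw [Finset.union_comm K₂ K₁] at h
    exact mul_le_mul_right h _
  calc (∑ z ∈ K₁, m z * P z {ω | ∀ n : ℕ, 1 ≤ n → ω n ∉ (K₁ : Set S)})
        + ∑ w ∈ K₂, m w * P w {ω | ∀ n : ℕ, 1 ≤ n → ω n ∉ (K₂ : Set S)}
      ≤ (∑ z ∈ K₁, (m z * P z {ω | ∀ n : ℕ, 1 ≤ n → ω n ∉ ((K₁ ∪ K₂ : Finset S) : Set S)}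
            + ∑ w ∈ K₂, m z * ∑' n : ℕ, P z {ω | ω n = w}))
        + ∑ w ∈ K₂, (m w * P w {ω | ∀ n : ℕ, 1 ≤ n → ω n ∉ ((K₁ ∪ K₂ : Finset S) : Set S)}
            + ∑ z ∈ K₁, m w * ∑' n : ℕ, P w {ω | ω n = z}) := by
        exact add_le_add (Finset.sum_le_sum h1) (Finset.sum_le_sum h2)
    _ = ((∑ z ∈ K₁, m z * P z {ω | ∀ n : ℕ, 1 ≤ n → ω n ∉ ((K₁ ∪ K₂ : Finset S) : Set S)})
          + ∑ w ∈ K₂, m w * P w {ω | ∀ n : ℕ, 1 ≤ n → ω n ∉ ((K₁ ∪ K₂ : Finset S) : Set S)})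
        + ∑ z ∈ K₁, ∑ w ∈ K₂,
            ((m z * ∑' n : ℕ, P z {ω | ω n = w}) + m w * ∑' n : ℕ, P w {ω | ω n = z}) := by
        simp only [Finset.sum_add_distrib]
        rw [Finset.sum_comm (s := K₂) (t := K₁)
            (f := fun w z => m w * ∑' n : ℕ, P w {ω | ω n = z})]
        ring
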